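/- Let J be a graded ideal of the ring R = F_2[U,Q]/(Q^2), where deg U = 2 and deg Q = 1, such that the localization U^{-1}J equals U^{-1}R. Then there exist integers i ≥ j ≥ 0 such that J is the ideal generated by U^i and Q·U^j. -/

import Mathlib

/-!
Over `F₂`, the only monomial of degree `n` that survives modulo `Q²` is `U^(n/2) Q^(n%2)`, so
every nonzero homogeneous element of `R` is `Uᵐ` or `Q Uᵐ`. Since `U⁻¹J` is the unit ideal,
some power of `U` lies in `J`; let `i` be the least such exponent and `j ≤ i` the least `m` with
`Q Uᵐ ∈ J`. Each homogeneous generator of `J` is then a multiple of `Uⁱ` or of `Q Uʲ`.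
-/

open MvPolynomial

noncomputable section

/-- The ring `R = F₂[U,Q]/(Q²)`, where `U = X 0` and `Q = X 1`. -/
abbrev RUQ : Type :=
  MvPolynomial (Fin 2) (ZMod 2) ⧸
    Ideal.span {(X 1 : MvPolynomial (Fin 2) (ZMod 2)) ^ 2}

/-- The quotient map. -/
noncomputable def mkR : MvPolynomial (Fin 2) (ZMod 2) →+* RUQ :=
  Ideal.Quotient.mk _

/-- The class of `U`. -/
noncomputable def U : RUQ := mkR (X 0)

/-- The class of `Q`. -/
noncomputable def Q : RUQ := mkR (X 1)

/-- The grading weights: `deg U = 2`, `deg Q = 1`. -/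
def wt : Fin 2 → ℕ := ![2, 1]

/-- `x ∈ R` is homogeneous of degree `n` (with respect to `deg U = 2`, `deg Q = 1`)
if it is represented by a weighted homogeneous polynomial of degree `n`. -/
def IsHomog (x : RUQ) (n : ℕ) : Prop :=
  ∃ p : MvPolynomial (Fin 2) (ZMod 2), p.IsWeightedHomogeneous wt n ∧ mkR p = x

/-- An ideal is graded if it is generated by its homogeneous elements. -/
def IsGradedIdeal (J : Ideal RUQ) : Prop :=
  J = Ideal.span {x : RUQ | x ∈ J ∧ ∃ n : ℕ, IsHomog x n}

theorem MvPolynomial.X_pow_dvd_of_forall_mem_support {σ R : Type*} [CommSemiring R]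
    {r : MvPolynomial σ R} {i : σ} {k : ℕ} (h : ∀ d ∈ r.support, k ≤ d i) :
    X i ^ k ∣ r := by
  classical
  rw [← r.support_sum_monomial_coeff]
  refine Finset.dvd_sum fun d hd => ⟨monomial (d - Finsupp.single i k) (coeff d r), ?_⟩
  rw [X_pow_eq_monomial, monomial_mul, one_mul,
    add_tsub_cancel_of_le (Finsupp.single_le_iff.mpr (h d hd))]

lemma weight_wt_apply (d : Fin 2 →₀ ℕ) : Finsupp.weight wt d = 2 * d 0 + d 1 := by
  simp [Finsupp.weight_apply, Finsupp.sum_fintype, Fin.sum_univ_two, wt, mul_comm]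

lemma eq_of_weight_wt_eq_of_lt_two {d : Fin 2 →₀ ℕ} {n : ℕ} (hw : Finsupp.weight wt d = n)
    (h1 : d 1 < 2) : d = Finsupp.single 0 (n / 2) + Finsupp.single 1 (n % 2) := by
  rw [weight_wt_apply] at hw
  ext i
  fin_cases i <;>
    simp only [Fin.zero_eta, Fin.mk_one, Fin.isValue, Finsupp.coe_add, Pi.add_apply,
      Finsupp.single_eq_same, Finsupp.single_eq_of_ne, ne_eq, zero_ne_one, one_ne_zero,
      not_false_eq_true, add_zero, zero_add] <;>
    omega

lemma mkR_monomial_single_add_single (a b : ℕ) :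
    mkR (monomial (Finsupp.single 0 a + Finsupp.single 1 b) 1) = U ^ a * Q ^ b := by
  rw [← one_mul (1 : ZMod 2), ← monomial_mul, ← X_pow_eq_monomial, ← X_pow_eq_monomial,
    map_mul, map_pow, map_pow]
  rfl

lemma mkR_eq_mkR_monomial_of_isWeightedHomogeneous {p : MvPolynomial (Fin 2) (ZMod 2)} {n : ℕ}
    (hp : p.IsWeightedHomogeneous wt n) :
    mkR p = mkR (monomial (Finsupp.single 0 (n / 2) + Finsupp.single 1 (n % 2))
      (coeff (Finsupp.single 0 (n / 2) + Finsupp.single 1 (n % 2)) p)) := by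
  rw [eq_comm, ← sub_eq_zero, ← map_sub, mkR, Ideal.Quotient.eq_zero_iff_mem,
    Ideal.mem_span_singleton]
  refine X_pow_dvd_of_forall_mem_support fun d hd => ?_
  rw [mem_support_iff, coeff_sub, coeff_monomial] at hd
  by_contra! h1
  split_ifs at hd with hd₀
  · exact hd (by rw [hd₀, sub_self])
  · rw [zero_sub, neg_ne_zero] at hd
    exact hd₀ (eq_of_weight_wt_eq_of_lt_two (hp hd) h1).symm

lemma IsHomog.eq_zero_or_eq_pow_or_eq_Q_mul_pow {x : RUQ} {n : ℕ} (h : IsHomog x n) :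
    x = 0 ∨ (∃ m, x = U ^ m) ∨ ∃ m, x = Q * U ^ m := by
  obtain ⟨p, hp, rfl⟩ := h
  rw [mkR_eq_mkR_monomial_of_isWeightedHomogeneous hp]
  have zmod_two_cases : ∀ c : ZMod 2, c = 0 ∨ c = 1 := by decide
  rcases zmod_two_cases (coeff _ p) with hc | hc
  · exact Or.inl (by rw [hc, monomial_zero, map_zero])
  · right
    rw [hc, mkR_monomial_single_add_single]
    rcases Nat.mod_two_eq_zero_or_one n with h | h <;> rw [h]
    · exact Or.inl ⟨n / 2, mul_one _⟩
    · exact Or.inr ⟨n / 2, by rw [pow_one, mul_comm]⟩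

lemma exists_pow_mem_of_map_algebraMap_away_eq_top {A : Type*} [CommRing A] {x : A}
    {J : Ideal A} (h : J.map (algebraMap A (Localization.Away x)) = ⊤) : ∃ n, x ^ n ∈ J := by
  obtain ⟨_, ⟨n, rfl⟩, hn⟩ :=
    (IsLocalization.algebraMap_mem_map_algebraMap_iff (Submonoid.powers x)
      (Localization.Away x) J 1).mp (by rw [h, map_one]; trivial)
  exact ⟨n, by simpa using hn⟩

/-- a graded ideal `J` of `F₂[U,Q]/(Q²)` whose localization at powers of `U`
is the whole localized ring is of the form `(Uⁱ, Q·Uʲ)` for some `i ≥ j ≥ 0`. -/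
theorem stmt0 (J : Ideal RUQ) (hgraded : IsGradedIdeal J)
    (hloc : Ideal.map (algebraMap RUQ (Localization.Away U)) J = ⊤) :
    ∃ i j : ℕ, j ≤ i ∧ J = Ideal.span {U ^ i, Q * U ^ j} := by
  classical
  have hU : ∃ m, U ^ m ∈ J := exists_pow_mem_of_map_algebraMap_away_eq_top hloc
  have hQUi : Q * U ^ Nat.find hU ∈ J := J.mul_mem_left Q (Nat.find_spec hU)
  have hQ : ∃ m, Q * U ^ m ∈ J := ⟨_, hQUi⟩
  refine ⟨_, _, Nat.find_min' hQ hQUi, le_antisymm ?_ ?_⟩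
  · refine hgraded.trans_le (Ideal.span_le.mpr ?_)
    rintro x ⟨hxJ, n, hx⟩
    rcases hx.eq_zero_or_eq_pow_or_eq_Q_mul_pow with rfl | ⟨m, rfl⟩ | ⟨m, rfl⟩
    · exact zero_mem _
    · exact Ideal.pow_mem_of_pow_mem _ (Ideal.subset_span (by simp)) (Nat.find_min' hU hxJ)
    · rw [← pow_mul_pow_sub U (Nat.find_min' hQ hxJ), ← mul_assoc]
      exact Ideal.mul_mem_right _ _ (Ideal.subset_span (by simp))
  · rw [Ideal.span_le, Set.insert_subset_iff, Set.singleton_subset_iff]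
    exact ⟨Nat.find_spec hU, Nat.find_spec hQ⟩
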